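/- Let μ ∈ ℝ^d, σ > 0, p > 1. Let ρ = Stud_p(μ, σ I_d) be the multivariate p-Student distribution on ℝ^d, i.e., the law of μ + σ Z sqrt(p/U) with Z ∼ N(0, I_d), U ∼ χ²_p independent, and let η = N(μ, σ I_d) be the Gaussian law of μ + σ Z. Then the 1-Wasserstein distance (for the Euclidean metric on ℝ^d) satisfies W_1(ρ, η) ≤ σ √d · E_{U∼χ²_p}[ | sqrt(p/U) − 1 | ]. -/

import Mathlib

open MeasureTheory ProbabilityTheory

/-- The chi-squared distribution with `p` (real) degrees of freedom, via its density. -/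
noncomputable def chiSq (p : ℝ) : Measure ℝ :=
  volume.withDensity fun u =>
    ENNReal.ofReal
      (if 0 < u then u ^ (p / 2 - 1) * Real.exp (-u / 2) / (2 ^ (p / 2) * Real.Gamma (p / 2))
       else 0)

/-- Standard Gaussian `N(0, I_d)` on `Fin d → ℝ`. -/
noncomputable def stdGaussPi (d : ℕ) : Measure (Fin d → ℝ) :=
  Measure.pi fun _ : Fin d => gaussianReal 0 1

/-- The multivariate `p`-Student distribution `Stud_p(μ, σ I_d)`:
the law of `μ + σ·Z·√(p/U)` with `Z ∼ N(0, I_d)` and `U ∼ χ²_p` independent. -/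
noncomputable def studentLaw (d : ℕ) (p σ : ℝ) (μ : Fin d → ℝ) : Measure (Fin d → ℝ) :=
  ((stdGaussPi d).prod (chiSq p)).map
    fun zu => fun i => μ i + σ * zu.1 i * Real.sqrt (p / zu.2)

/-- The Gaussian law of `μ + σ·Z` with `Z ∼ N(0, I_d)`, i.e. `N(μ, σ I_d)`. -/
noncomputable def gaussLaw (d : ℕ) (σ : ℝ) (μ : Fin d → ℝ) : Measure (Fin d → ℝ) :=
  (stdGaussPi d).map fun z => fun i => μ i + σ * z i

/-!
Couple the two laws through the same Gaussian vector `Z`. The distance between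
`μ + σ Z √(p/U)` and `μ + σ Z` is `σ ‖Z‖ |√(p/U) - 1|`, whose expectation factors by independence
into `σ E‖Z‖ · E|√(p/U) - 1|`, and Jensen's inequality gives `E‖Z‖ ≤ √(E‖Z‖²) = √d`.
-/

open scoped NNReal

lemma chiSq_eq_gammaMeasure (p : ℝ) : chiSq p = gammaMeasure (p / 2) (1 / 2) := by
  refine withDensity_congr_ae (measure_mono_null (fun u hu => ?_) (measure_singleton (0 : ℝ)))
  by_contra hu0
  apply hu
  simp only [Set.mem_ofPred_eq]
  rcases lt_or_gt_of_ne hu0 with hneg | hpos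
  · simp [gammaPDF_of_neg hneg, hneg.not_gt]
  · rw [if_pos hpos, gammaPDF_of_nonneg hpos.le, one_div, Real.inv_rpow zero_le_two]
    congr 1
    ring_nf

instance (p : ℝ) : SFinite (chiSq p) := by
  unfold chiSq; infer_instance

lemma isProbabilityMeasure_chiSq {p : ℝ} (hp : 0 < p) : IsProbabilityMeasure (chiSq p) := by
  rw [chiSq_eq_gammaMeasure]
  exact isProbabilityMeasure_gammaMeasure (half_pos hp) (by norm_num)

lemma integral_sq_gaussianReal (m : ℝ) (v : ℝ≥0) : ∫ x, x ^ 2 ∂gaussianReal m v = v + m ^ 2 := by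
  have h := variance_eq_sub (memLp_id_gaussianReal 2 (μ := m) (v := v))
  simp only [variance_id_gaussianReal, Pi.pow_apply, id_eq, integral_id_gaussianReal] at h
  linarith

instance (d : ℕ) : IsProbabilityMeasure (stdGaussPi d) := by
  unfold stdGaussPi; infer_instance

lemma integrable_sq_eval_stdGaussPi {d : ℕ} (i : Fin d) :
    Integrable (fun z : Fin d → ℝ => z i ^ 2) (stdGaussPi d) :=
  integrable_comp_eval (f := fun x => x ^ 2) (memLp_id_gaussianReal 2).integrable_sq

lemma integral_sum_sq_stdGaussPi (d : ℕ) : ∫ z, ∑ i, z i ^ 2 ∂stdGaussPi d = d := by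
  rw [integral_finsetSum _ fun i _ => integrable_sq_eval_stdGaussPi i]
  have h (i : Fin d) : ∫ z, z i ^ 2 ∂stdGaussPi d = 1 := by
    rw [stdGaussPi, integral_comp_eval (f := fun x => x ^ 2) (by fun_prop), integral_sq_gaussianReal]
    norm_num
  simp [h]

lemma integral_sqrt_le_sqrt_integral {α : Type*} [MeasurableSpace α] {μ : Measure α}
    [IsProbabilityMeasure μ] {f : α → ℝ} (hf0 : 0 ≤ᵐ[μ] f) (hf : Integrable f μ) :
    ∫ x, √(f x) ∂μ ≤ √(∫ x, f x ∂μ) := by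
  have hsqrt : Integrable (fun x => √(f x)) μ := by
    refine ((memLp_two_iff_integrable_sq
      (Real.continuous_sqrt.comp_aestronglyMeasurable hf.1)).2 (hf.congr ?_)).integrable one_le_two
    filter_upwards [hf0] with x hx using (Real.sq_sqrt hx).symm
  exact Real.strictConcaveOn_sqrt.concaveOn.le_map_integral Real.continuous_sqrt.continuousOn
    isClosed_Ici hf0 hf hsqrt

lemma integral_sqrt_sum_sq_stdGaussPi_le (d : ℕ) :
    ∫ z, √(∑ i, z i ^ 2) ∂stdGaussPi d ≤ √d := by
  rw [← integral_sum_sq_stdGaussPi]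
  exact integral_sqrt_le_sqrt_integral (ae_of_all _ fun z => by positivity)
    (integrable_finsetSum _ fun i _ => integrable_sq_eval_stdGaussPi i)

lemma iInf_integral_coupling_le {α β : Type*} [MeasurableSpace α] [MeasurableSpace β]
    {ρ : Measure α} {η : Measure β} {c : α × β → ℝ} (hc : 0 ≤ c) (γ : Measure (α × β))
    [IsProbabilityMeasure γ] (hfst : γ.map Prod.fst = ρ) (hsnd : γ.map Prod.snd = η) :
    (⨅ γ' : {γ' : Measure (α × β) //
        IsProbabilityMeasure γ' ∧ γ'.map Prod.fst = ρ ∧ γ'.map Prod.snd = η},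
      ∫ q, c q ∂(γ'.1 : Measure (α × β))) ≤ ∫ q, c q ∂γ :=
  ciInf_le_of_le ⟨0, by rintro _ ⟨γ', rfl⟩; exact integral_nonneg hc⟩ ⟨γ, ‹_›, hfst, hsnd⟩ le_rfl

noncomputable def studentGaussCoupling (d : ℕ) (p σ : ℝ) (μ : Fin d → ℝ) :
    Measure ((Fin d → ℝ) × (Fin d → ℝ)) :=
  ((stdGaussPi d).prod (chiSq p)).map
    fun zu => (fun i => μ i + σ * zu.1 i * √(p / zu.2), fun i => μ i + σ * zu.1 i)

section StudentGaussCoupling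

variable (d : ℕ) (p σ : ℝ) (μ : Fin d → ℝ)

lemma map_fst_studentGaussCoupling :
    (studentGaussCoupling d p σ μ).map Prod.fst = studentLaw d p σ μ := by
  rw [studentGaussCoupling, Measure.map_map measurable_fst (by fun_prop)]
  rfl

lemma integral_dist_studentGaussCoupling :
    ∫ q, √(∑ i, (q.1 i - q.2 i) ^ 2) ∂studentGaussCoupling d p σ μ =
      |σ| * (∫ z, √(∑ i, z i ^ 2) ∂stdGaussPi d) * ∫ u, |√(p / u) - 1| ∂chiSq p := by
  have hdist (z : Fin d → ℝ) (s : ℝ) :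
      √(∑ i, ((μ i + σ * z i * s) - (μ i + σ * z i)) ^ 2) = √(∑ i, z i ^ 2) * |σ * (s - 1)| := by
    rw [← Real.sqrt_sq_eq_abs, ← Real.sqrt_mul (by positivity), Finset.sum_mul]
    congr 1
    exact Finset.sum_congr rfl fun i _ => by ring
  rw [studentGaussCoupling, integral_map (by fun_prop) (by fun_prop)]
  simp only [hdist, abs_mul]
  rw [integral_prod_mul (fun z : Fin d → ℝ => √(∑ i, z i ^ 2)) fun u => |σ| * |√(p / u) - 1|,
    integral_const_mul]
  ring

variable [IsProbabilityMeasure (chiSq p)]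

instance : IsProbabilityMeasure (studentGaussCoupling d p σ μ) :=
  Measure.isProbabilityMeasure_map (by fun_prop)

lemma map_snd_studentGaussCoupling :
    (studentGaussCoupling d p σ μ).map Prod.snd = gaussLaw d σ μ := by
  rw [studentGaussCoupling, Measure.map_map measurable_snd (by fun_prop)]
  change Measure.map ((fun z : Fin d → ℝ => fun i => μ i + σ * z i) ∘ Prod.fst) _ = _
  rw [← Measure.map_map (by fun_prop) measurable_fst, Measure.map_fst_prod, measure_univ, one_smul,
    gaussLaw]

end StudentGaussCoupling

theorem stmt19 (d : ℕ) (μ : Fin d → ℝ) (σ p : ℝ) (hσ : 0 < σ) (hp : 1 < p) :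
    (⨅ γ : {γ : Measure ((Fin d → ℝ) × (Fin d → ℝ)) //
        IsProbabilityMeasure γ ∧
        γ.map Prod.fst = studentLaw d p σ μ ∧
        γ.map Prod.snd = gaussLaw d σ μ},
      ∫ q : (Fin d → ℝ) × (Fin d → ℝ), Real.sqrt (∑ i, (q.1 i - q.2 i) ^ 2) ∂(γ.1 : Measure ((Fin d → ℝ) × (Fin d → ℝ)))) ≤
      σ * Real.sqrt d * ∫ u, |Real.sqrt (p / u) - 1| ∂(chiSq p) := by
  have := isProbabilityMeasure_chiSq (by linarith : 0 < p)
  refine (iInf_integral_coupling_le (fun q => by positivity) (studentGaussCoupling d p σ μ)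
    (map_fst_studentGaussCoupling d p σ μ) (map_snd_studentGaussCoupling d p σ μ)).trans ?_
  rw [integral_dist_studentGaussCoupling, abs_of_pos hσ]
  gcongr
  exact integral_sqrt_sum_sq_stdGaussPi_le d
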